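/- Let A ∈ 𝓡 be a fixed set and let X^(1), X^(2) be independent random vectors in [0,∞)^d with distributions F_1, F_2 ∈ 𝓣_A respectively. Then F_A^{(1)} * F_A^{(2)} ∈ 𝓐 (where F_A^{(1)} * F_A^{(2)} is the distribution of Y_A^{(1)} + Y_A^{(2)} for independent Y_A^{(1)} ~ F_A^{(1)}, Y_A^{(2)} ~ F_A^{(2)}) if and only if F_1 * F_2 ∈ 𝓐_A (where F_1 * F_2 is the distribution of X^(1) + X^(2)). -/

import Mathlib

/-!
`Y_A` is the gauge of the convex neighbourhood `Aᶜ` of the origin, hence subadditive. With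
`T = Y_A(X₁ + X₂)` and `Rᵢ = Y_A(-Xᵢ)` this gives `T ≤ Y₁ + Y₂` and `Yᵢ ≤ T + Rⱼ`, so the tail of
`T` lies below the tail of `F_A⁽¹⁾ * F_A⁽²⁾` and, after a bounded shift, above
`(1 - ε)(F̄_A⁽¹⁾ + F̄_A⁽²⁾)`. For long-tailed summands whose tails are `O` of a subexponential
tail, the tail of the convolution is asymptotic to `F̄_A⁽¹⁾ + F̄_A⁽²⁾`; applied to whichever side
is assumed subexponential, this makes the two tails asymptotically equivalent, and both `𝓢` and
`𝓟𝓓` are invariant under tail equivalence.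
-/

open MeasureTheory ProbabilityTheory Filter Topology
open scoped Pointwise

namespace Paper

variable {d : ℕ} {Ω : Type*} [MeasurableSpace Ω]

/-- The family `𝓡` of open, increasing sets with convex complement, bounded away from `0`. -/
structure IsRSet (d : ℕ) (A : Set (Fin d → ℝ)) : Prop where
  isOpen : IsOpen A
  increasing : ∀ u ∈ A, ∀ v : Fin d → ℝ, (∀ i, 0 ≤ v i) → u + v ∈ A
  convex_compl : Convex ℝ Aᶜ
  zero_notMem_closure : (0 : Fin d → ℝ) ∉ closure A

/-- `Y_A(z) = sup { u > 0 : z ∈ u A }`. -/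
noncomputable def suprA (A : Set (Fin d → ℝ)) (z : Fin d → ℝ) : ℝ :=
  sSup {u : ℝ | 0 < u ∧ z ∈ u • A}

/-- `F_A`, the distribution of `Y_A = suprA A ∘ X` under `P`. -/
noncomputable def FA (P : Measure Ω) (A : Set (Fin d → ℝ)) (X : Ω → Fin d → ℝ) :
    Measure ℝ :=
  P.map (fun ω => suprA A (X ω))

/-- `F (x A) = P[X ∈ x A]` as a real number. -/
noncomputable def vTail (P : Measure Ω) (A : Set (Fin d → ℝ)) (X : Ω → Fin d → ℝ)
    (x : ℝ) : ℝ :=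
  (P {ω | X ω ∈ x • A}).toReal

/-- Tail `ν(x, ∞)` of a measure on `ℝ`, as a real number. -/
noncomputable def mTail (ν : Measure ℝ) (x : ℝ) : ℝ := (ν (Set.Ioi x)).toReal

/-- Convolution of two measures on `ℝ`. -/
noncomputable def mConv (μ ν : Measure ℝ) : Measure ℝ :=
  (μ.prod ν).map (fun p => p.1 + p.2)

/-- `n`-fold convolution power. -/
noncomputable def mConvN (ν : Measure ℝ) : ℕ → Measure ℝ
  | 0 => Measure.dirac 0
  | n + 1 => mConv (mConvN ν n) ν

/-- Long-tailed class `𝓛`. -/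
def MemL (ν : Measure ℝ) : Prop :=
  ∀ a : ℝ, 0 < a → Tendsto (fun x => mTail ν (x - a) / mTail ν x) atTop (𝓝 1)

/-- Subexponential class `𝓢`. -/
def MemS (ν : Measure ℝ) : Prop :=
  Tendsto (fun x => mTail (mConv ν ν) x / mTail ν x) atTop (𝓝 2)

/-- Dominatedly varying class `𝓓`. -/
def MemD (ν : Measure ℝ) : Prop :=
  ∀ y : ℝ, 0 < y → y < 1 → ∃ C : ℝ, ∀ᶠ x in atTop, mTail ν (y * x) / mTail ν x ≤ C

/-- Positively decreasing class `𝓟𝓓`. -/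
def MemPD (ν : Measure ℝ) : Prop :=
  ∀ b : ℝ, 1 < b → ∃ c : ℝ, c < 1 ∧ ∀ᶠ x in atTop, mTail ν (b * x) / mTail ν x ≤ c

/-- Consistently varying class `𝓒`. -/
def MemC (ν : Measure ℝ) : Prop :=
  Tendsto (fun b : ℝ => Filter.liminf (fun x => mTail ν (b * x) / mTail ν x) atTop)
    (nhdsWithin 1 (Set.Ioi 1)) (𝓝 1)

/-- `𝓐 = 𝓢 ∩ 𝓟𝓓`. -/
def MemA (ν : Measure ℝ) : Prop := MemS ν ∧ MemPD ν

/-- `𝓣 = 𝓛 ∩ 𝓟𝓓`. -/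
def MemT (ν : Measure ℝ) : Prop := MemL ν ∧ MemPD ν

/-- Regular variation of index `-α` of the tail of `ν`. -/
def MemRV (ν : Measure ℝ) (α : ℝ) : Prop :=
  ∀ t : ℝ, 0 < t → Tendsto (fun x => mTail ν (t * x) / mTail ν x) atTop (𝓝 (t ^ (-α)))

/-- Weak tail-equivalence `f ≍ g`. -/
def WeakTailEquiv (f g : ℝ → ℝ) : Prop :=
  ∃ c₁ c₂ : ℝ, 0 < c₁ ∧ ∀ᶠ x in atTop, c₁ * g x ≤ f x ∧ f x ≤ c₂ * g x

/-- (Standard) multivariate regular variation `F ∈ MRV(α, V, μ)` of the distribution of `X`. -/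
structure IsMRV (P : Measure Ω) (X : Ω → Fin d → ℝ) (α : ℝ) (V : Measure ℝ)
    (μ : Measure (Fin d → ℝ)) : Prop where
  alpha_pos : 0 < α
  V_prob : IsProbabilityMeasure V
  V_rv : MemRV V α
  mu_ne_zero : ∃ B : Set (Fin d → ℝ), (0 : Fin d → ℝ) ∉ closure B ∧ 0 < μ B
  mu_radon : ∀ B : Set (Fin d → ℝ), (0 : Fin d → ℝ) ∉ closure B → μ B ≠ ⊤
  tendsto : ∀ B : Set (Fin d → ℝ), MeasurableSet B → (0 : Fin d → ℝ) ∉ closure B →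
    μ (frontier B) = 0 →
    Tendsto (fun x => vTail P B X x / mTail V x) atTop (𝓝 ((μ B).toReal))

/-- Support of a distribution on `ℝ`. -/
def measSupport (ν : Measure ℝ) : Set ℝ := {t | ∀ U ∈ 𝓝 t, 0 < ν U}

/-- Assumption `CD_A`: conditional dependence of `(X, Θ)` on `A` with transfer function `h`:
`P[Y_A > x | Θ = t] ~ h(t) P[Y_A > x]` uniformly on the support of the distribution of `Θ`. -/
def CDA (P : Measure Ω) [IsFiniteMeasure P] (A : Set (Fin d → ℝ))
    (X : Ω → Fin d → ℝ) (Θ : Ω → ℝ) (h : ℝ → ℝ) : Prop :=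
  ∀ ε : ℝ, 0 < ε → ∀ᶠ x in atTop, ∀ t ∈ measSupport (P.map Θ),
    |((condDistrib (fun ω => suprA A (X ω)) Θ P) t (Set.Ioi x)).toReal /
        (h t * (P {ω | x < suprA A (X ω)}).toReal) - 1| ≤ ε

/-- Assumption `B_A`: `P[Θ > c x] = o(P[Θ Y_A > x])` for all `c > 0`. -/
def BA (P : Measure Ω) (A : Set (Fin d → ℝ)) (X : Ω → Fin d → ℝ) (Θ : Ω → ℝ) : Prop :=
  ∀ c : ℝ, 0 < c →
    Tendsto (fun x => (P {ω | c * x < Θ ω}).toReal /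
      (P {ω | x < Θ ω * suprA A (X ω)}).toReal) atTop (𝓝 0)

/-- Assumption `B_A` in the form `P[Θ > c x] = o(P[Θ X ∈ x A])` for all `c > 0`. -/
def BA' (P : Measure Ω) (A : Set (Fin d → ℝ)) (X : Ω → Fin d → ℝ) (Θ : Ω → ℝ) : Prop :=
  ∀ c : ℝ, 0 < c →
    Tendsto (fun x => (P {ω | c * x < Θ ω}).toReal /
      (P {ω | Θ ω • X ω ∈ x • A}).toReal) atTop (𝓝 0)

open Set Asymptotics

lemma mConv_eq_conv (ρ σ : Measure ℝ) : mConv ρ σ = ρ ∗ σ := rfl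

section Tail

variable {ν : Measure ℝ}

lemma mTail_def (ν : Measure ℝ) (x : ℝ) : mTail ν x = ν.real (Ioi x) := rfl

lemma mTail_nonneg (ν : Measure ℝ) (x : ℝ) : 0 ≤ mTail ν x := measureReal_nonneg

lemma mTail_antitone [IsFiniteMeasure ν] : Antitone (mTail ν) :=
  fun _ _ h => measureReal_mono (Ioi_subset_Ioi h)

lemma tendsto_mTail_atTop (ν : Measure ℝ) [IsFiniteMeasure ν] : Tendsto (mTail ν) atTop (𝓝 0) := by
  have h := tendsto_measure_iInter_atTop (μ := ν) (fun x => measurableSet_Ioi.nullMeasurableSet)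
    (fun _ _ hab => Ioi_subset_Ioi hab) ⟨0, measure_ne_top ν _⟩
  have h0 : (⋂ x : ℝ, Ioi x) = ∅ := iInter_eq_empty_iff.2 fun x => ⟨x, lt_irrefl x⟩
  rw [h0, measure_empty] at h
  exact (ENNReal.tendsto_toReal ENNReal.zero_ne_top).comp h

lemma mTail_pos_of_tendsto_div [IsFiniteMeasure ν] {f : ℝ → ℝ} {c : ℝ} (hc : c ≠ 0)
    (h : Tendsto (fun x => f x / mTail ν x) atTop (𝓝 c)) (x : ℝ) : 0 < mTail ν x := by
  refine (mTail_nonneg ν x).lt_of_ne fun hx => hc (tendsto_nhds_unique h ?_)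
  refine tendsto_const_nhds.congr' ?_
  filter_upwards [eventually_ge_atTop x] with y hy
  rw [le_antisymm (hx ▸ mTail_antitone hy) (mTail_nonneg ν y), div_zero]

lemma MemL.mTail_pos [IsFiniteMeasure ν] (hL : MemL ν) : ∀ x, 0 < mTail ν x :=
  mTail_pos_of_tendsto_div one_ne_zero (hL 1 one_pos)

lemma MemS.mTail_pos [IsFiniteMeasure ν] (hS : MemS ν) : ∀ x, 0 < mTail ν x :=
  mTail_pos_of_tendsto_div two_ne_zero hS

end Tail

lemma isEquivalent_iff_eventually {α : Type*} {l : Filter α} {u v : α → ℝ} (hu : ∀ x, 0 ≤ u x)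
    (hv : ∀ x, 0 ≤ v x) :
    u ~[l] v ↔ ∀ ε > 0, ∀ᶠ x in l, (1 - ε) * u x ≤ v x ∧ (1 - ε) * v x ≤ u x := by
  simp only [IsEquivalent, isLittleO_iff, Pi.sub_apply, Real.norm_eq_abs, abs_of_nonneg (hv _),
    abs_le]
  constructor
  · intro h ε hε
    filter_upwards [h hε] with x hx
    constructor
    · rcases le_total ε 1 with hε1 | hε1 <;> nlinarith [hu x, hv x]
    · linarith
  · intro h c hc
    filter_upwards [h (c / (1 + c)) (by positivity)] with x hx
    have e : 1 - c / (1 + c) = (1 + c)⁻¹ := by field_simp; ring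
    rw [e, inv_mul_le_iff₀ (by positivity), inv_mul_le_iff₀ (by positivity)] at hx
    constructor <;> nlinarith [hu x, hv x]

lemma MemL.isEquivalent_sub {ν : Measure ℝ} [IsFiniteMeasure ν] (hL : MemL ν) (a : ℝ) :
    (fun x => mTail ν (x - a)) ~[atTop] mTail ν := by
  have key : ∀ b, 0 < b → (fun x => mTail ν (x - b)) ~[atTop] mTail ν :=
    fun b hb => isEquivalent_of_tendsto_one (hL b hb)
  rcases lt_trichotomy a 0 with ha | rfl | ha
  · have h := (key (-a) (neg_pos.2 ha)).comp_tendsto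
      (tendsto_atTop_add_const_right atTop (-a) tendsto_id)
    simpa [Function.comp_def, sub_eq_add_neg] using h.symm
  · simpa using IsEquivalent.refl
  · exact key a ha


lemma measureReal_add_add_le {α : Type*} [MeasurableSpace α] {μ : Measure α} [IsFiniteMeasure μ]
    {s t u S : Set α} (hst : Disjoint s t) (hsu : Disjoint s u) (htu : Disjoint t u)
    (ht : MeasurableSet t) (hu : MeasurableSet u) (hS : s ∪ t ∪ u ⊆ S) :
    μ.real s + μ.real t + μ.real u ≤ μ.real S := by
  rw [← measureReal_union hst ht, ← measureReal_union (disjoint_union_left.2 ⟨hsu, htu⟩) hu]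
  exact measureReal_mono hS

section Convolution

def crossSet (h x : ℝ) : Set (ℝ × ℝ) := {p | h < p.1 ∧ h < p.2 ∧ x < p.1 + p.2}

lemma measurableSet_crossSet (h x : ℝ) : MeasurableSet (crossSet h x) :=
  (measurableSet_lt measurable_const measurable_fst).inter
    ((measurableSet_lt measurable_const measurable_snd).inter
      (measurableSet_lt measurable_const (measurable_fst.add measurable_snd)))

variable {ρ σ : Measure ℝ}

instance [IsProbabilityMeasure ρ] [IsProbabilityMeasure σ] : IsProbabilityMeasure (mConv ρ σ) :=
  inferInstanceAs (IsProbabilityMeasure (ρ ∗ σ))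

lemma mTail_mConv [SFinite ρ] [SFinite σ] (x : ℝ) :
    mTail (mConv ρ σ) x = (ρ.prod σ).real {p | x < p.1 + p.2} := by
  rw [mTail_def, mConv, map_measureReal_apply (f := fun p : ℝ × ℝ => p.1 + p.2)
    (measurable_fst.add measurable_snd) measurableSet_Ioi]
  rfl

lemma mConv_Iio_zero [SFinite ρ] [SFinite σ] (hρ : ρ (Iio 0) = 0) (hσ : σ (Iio 0) = 0) :
    mConv ρ σ (Iio 0) = 0 := by
  rw [mConv, Measure.map_apply (f := fun p : ℝ × ℝ => p.1 + p.2) (measurable_fst.add measurable_snd)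
    measurableSet_Iio]
  refine measure_mono_null (t := Iio 0 ×ˢ univ ∪ univ ×ˢ Iio 0) ?_ (measure_union_null ?_ ?_)
  · rintro ⟨u, v⟩ (huv : u + v < 0)
    by_contra! h
    simp only [mem_union, mem_prod, mem_Iio, mem_univ, and_true, true_and, not_or, not_lt] at h
    linarith
  all_goals rw [Measure.prod_prod]; simp [hρ, hσ]

lemma measureReal_crossSet_comm [SFinite ρ] [SFinite σ] (h x : ℝ) :
    (ρ.prod σ).real (crossSet h x) = (σ.prod ρ).real (crossSet h x) := by
  rw [← Measure.prod_swap, map_measureReal_apply measurable_swap (measurableSet_crossSet h x)]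
  congr 1
  ext p
  simp only [crossSet, mem_preimage, Prod.fst_swap, Prod.snd_swap, mem_ofPred_eq, add_comm]
  tauto

variable [IsProbabilityMeasure ρ] [IsProbabilityMeasure σ]

lemma measureReal_crossSet_le_mul (σ' : Measure ℝ) [IsFiniteMeasure σ']
    {h K : ℝ} (hK : 0 ≤ K) (hle : ∀ z, h ≤ z → mTail σ z ≤ K * mTail σ' z) (x : ℝ) :
    (ρ.prod σ).real (crossSet h x) ≤ K * (ρ.prod σ').real (crossSet h x) := by
  have hle' : ∀ z, h ≤ z → σ (Ioi z) ≤ ENNReal.ofReal K * σ' (Ioi z) := fun z hz =>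
    calc σ (Ioi z) = ENNReal.ofReal (mTail σ z) := (ENNReal.ofReal_toReal (measure_ne_top _ _)).symm
      _ ≤ ENNReal.ofReal (K * mTail σ' z) := ENNReal.ofReal_le_ofReal (hle z hz)
      _ = ENNReal.ofReal K * σ' (Ioi z) := by
        rw [ENNReal.ofReal_mul hK, mTail, ENNReal.ofReal_toReal (measure_ne_top _ _)]
  have hsec : ∀ u, σ (Prod.mk u ⁻¹' crossSet h x) ≤
      ENNReal.ofReal K * σ' (Prod.mk u ⁻¹' crossSet h x) := by
    intro u
    by_cases hu : h < u
    · have hsec : Prod.mk u ⁻¹' crossSet h x = Ioi (max h (x - u)) := by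
        ext v
        simp only [crossSet, mem_preimage, mem_ofPred_eq, mem_Ioi, max_lt_iff, hu, true_and]
        constructor <;> rintro ⟨h1, h2⟩ <;> exact ⟨h1, by linarith⟩
      rw [hsec]
      exact hle' _ (le_max_left _ _)
    · have hsec : Prod.mk u ⁻¹' crossSet h x = ∅ := by
        ext v
        simp only [crossSet, mem_preimage, mem_ofPred_eq, hu, false_and, mem_empty_iff_false]
      simp [hsec]
  have hprod : (ρ.prod σ) (crossSet h x) ≤ ENNReal.ofReal K * (ρ.prod σ') (crossSet h x) := by
    rw [Measure.prod_apply (measurableSet_crossSet h x),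
      Measure.prod_apply (measurableSet_crossSet h x),
      ← lintegral_const_mul' _ _ ENNReal.ofReal_ne_top]
    exact lintegral_mono hsec
  rw [measureReal_def, measureReal_def, ← ENNReal.toReal_ofReal hK, ← ENNReal.toReal_mul]
  exact ENNReal.toReal_mono (ENNReal.mul_ne_top ENNReal.ofReal_ne_top (measure_ne_top _ _)) hprod

lemma measureReal_Ici_zero (hρ : ρ (Iio 0) = 0) : ρ.real (Ici 0) = 1 := by
  rw [← compl_Iio, measureReal_compl measurableSet_Iio, probReal_univ, measureReal_def,
    hρ, ENNReal.toReal_zero, sub_zero]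

lemma measureReal_Icc_zero (hρ : ρ (Iio 0) = 0) {c : ℝ} (hc : 0 ≤ c) :
    ρ.real (Icc 0 c) = 1 - mTail ρ c := by
  rw [← Ici_sdiff_Ioi, measureReal_sdiff (Ioi_subset_Ici hc) measurableSet_Ioi,
    measureReal_Ici_zero hρ, mTail_def]

lemma mTail_le_mTail_mConv_left (hσ : σ (Iio 0) = 0) (x : ℝ) :
    mTail ρ x ≤ mTail (mConv ρ σ) x := by
  calc mTail ρ x = (ρ.prod σ).real (Ioi x ×ˢ Ici 0) := by
        rw [measureReal_prod_prod, measureReal_Ici_zero hσ, mul_one, mTail_def]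
    _ ≤ mTail (mConv ρ σ) x := by
        rw [mTail_mConv]
        exact measureReal_mono fun p (hp : x < p.1 ∧ 0 ≤ p.2) =>
          show x < p.1 + p.2 by linarith [hp.1, hp.2]

lemma mTail_le_mTail_mConv_right (hρ : ρ (Iio 0) = 0) (x : ℝ) :
    mTail σ x ≤ mTail (mConv ρ σ) x := by
  rw [mConv_eq_conv, Measure.conv_comm]
  exact mTail_le_mTail_mConv_left hρ x

lemma mTail_add_mTail_le (hρ : ρ (Iio 0) = 0) (hσ : σ (Iio 0) = 0) (x : ℝ) :
    mTail ρ x + mTail σ x ≤ mTail (mConv ρ σ) x + mTail ρ x * mTail σ x := by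
  have hIE := measureReal_union_add_inter (μ := ρ.prod σ) (s := Ioi x ×ˢ Ici 0)
    (t := Ici 0 ×ˢ Ioi x) (measurableSet_Ici.prod measurableSet_Ioi)
  rw [measureReal_prod_prod, measureReal_prod_prod, measureReal_Ici_zero hρ,
    measureReal_Ici_zero hσ, mul_one, one_mul] at hIE
  rw [mTail_def, mTail_def, ← hIE, mTail_mConv, ← measureReal_prod_prod]
  refine add_le_add (measureReal_mono ?_) (measureReal_mono fun p hp => ⟨hp.1.1, hp.2.2⟩)
  rintro p (⟨h1, h2⟩ | ⟨h1, h2⟩) <;>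
    simp only [mem_Ioi, mem_Ici, mem_ofPred_eq] at h1 h2 ⊢ <;> linarith

lemma mTail_mConv_le_add_crossSet (h x : ℝ) :
    mTail (mConv ρ σ) x ≤ mTail ρ (x - h) + mTail σ (x - h) + (ρ.prod σ).real (crossSet h x) := by
  have hsub : {p : ℝ × ℝ | x < p.1 + p.2} ⊆
      Ioi (x - h) ×ˢ univ ∪ univ ×ˢ Ioi (x - h) ∪ crossSet h x := by
    rintro ⟨u, v⟩ (huv : x < u + v)
    by_cases h1 : x - h < u
    · exact Or.inl (Or.inl ⟨h1, trivial⟩)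
    by_cases h2 : x - h < v
    · exact Or.inl (Or.inr ⟨trivial, h2⟩)
    exact Or.inr ⟨by linarith, by linarith, huv⟩
  calc mTail (mConv ρ σ) x ≤ (ρ.prod σ).real (Ioi (x - h) ×ˢ univ) +
        (ρ.prod σ).real (univ ×ˢ Ioi (x - h)) + (ρ.prod σ).real (crossSet h x) := by
        rw [mTail_mConv]
        exact (measureReal_mono hsub).trans
          ((measureReal_union_le _ _).trans (add_le_add_left (measureReal_union_le _ _) _))
    _ = _ := by
        rw [measureReal_prod_prod, measureReal_prod_prod, probReal_univ,
          probReal_univ, mul_one, one_mul, mTail_def, mTail_def]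

lemma measureReal_crossSet_add_le (hρ : ρ (Iio 0) = 0) (hσ : σ (Iio 0) = 0) {h x : ℝ}
    (hh : 0 ≤ h) (hhx : h ≤ x) :
    (ρ.prod σ).real (crossSet h x) + mTail ρ x * (1 - mTail σ h) + (1 - mTail ρ h) * mTail σ x ≤
      mTail (mConv ρ σ) x := by
  rw [← measureReal_Icc_zero hσ hh, ← measureReal_Icc_zero hρ hh, mTail_def, mTail_def,
    ← measureReal_prod_prod, ← measureReal_prod_prod, mTail_mConv]
  refine measureReal_add_add_le ?_ ?_ ?_ (measurableSet_Ioi.prod measurableSet_Icc)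
    (measurableSet_Icc.prod measurableSet_Ioi) ?_
  · exact disjoint_left.2 fun p hp hq => absurd hq.2.2 (not_le.2 hp.2.1)
  · exact disjoint_left.2 fun p hp hq => absurd hq.1.2 (not_le.2 hp.1)
  · exact disjoint_left.2 fun p hp hq => absurd hq.1.2 (not_le.2 (hhx.trans_lt hp.1))
  · rintro p ((hp | ⟨h1, h2⟩) | ⟨h1, h2⟩)
    · exact hp.2.2
    all_goals simp only [mem_Ioi, mem_Icc, mem_ofPred_eq] at h1 h2 ⊢; linarith

lemma le_mTail_mConv (hρ : ρ (Iio 0) = 0) (hσ : σ (Iio 0) = 0) {c x : ℝ} (hc : 0 ≤ c)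
    (hcx : c ≤ x) :
    (1 - mTail ρ c) * mTail σ x + (mTail ρ c - mTail ρ x) * mTail σ (x - c) + mTail ρ x ≤
      mTail (mConv ρ σ) x := by
  have hIoc : ρ.real (Ioc c x) = mTail ρ c - mTail ρ x := by
    rw [← Ioi_sdiff_Ioi, measureReal_sdiff (Ioi_subset_Ioi hcx) measurableSet_Ioi, mTail_def,
      mTail_def]
  rw [← measureReal_Icc_zero hρ hc, ← hIoc, ← mul_one (mTail ρ x), ← measureReal_Ici_zero hσ,
    mTail_def, mTail_def, mTail_def, ← measureReal_prod_prod, ← measureReal_prod_prod,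
    ← measureReal_prod_prod, mTail_mConv]
  refine measureReal_add_add_le ?_ ?_ ?_ (measurableSet_Ioc.prod measurableSet_Ioi)
    (measurableSet_Ioi.prod measurableSet_Ici) ?_
  · exact disjoint_left.2 fun p hp hq => absurd hq.1.1 (not_lt.2 hp.1.2)
  · exact disjoint_left.2 fun p hp hq => absurd hq.1 (not_lt.2 (hp.1.2.trans hcx))
  · exact disjoint_left.2 fun p hp hq => absurd hq.1 (not_lt.2 hp.1.2)
  · rintro p ((⟨h1, h2⟩ | ⟨h1, h2⟩) | ⟨h1, h2⟩) <;>
      simp only [mem_Ioi, mem_Icc, mem_Ioc, mem_Ici, mem_ofPred_eq] at h1 h2 ⊢ <;> linarith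

end Convolution

lemma isBigO_of_le_of_nonneg {α : Type*} {l : Filter α} {f g : α → ℝ} (hf : ∀ x, 0 ≤ f x)
    (h : ∀ x, f x ≤ g x) : f =O[l] g :=
  isBigO_of_le l fun x => by
    rw [Real.norm_of_nonneg (hf x), Real.norm_of_nonneg ((hf x).trans (h x))]
    exact h x

lemma exists_forall_ge_mTail_le_mul {μ τ : Measure ℝ} (h : mTail μ =O[atTop] mTail τ) :
    ∃ K, 0 ≤ K ∧ ∃ z₀, ∀ z ≥ z₀, mTail μ z ≤ K * mTail τ z := by
  obtain ⟨K, hK, hKO⟩ := h.exists_nonneg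
  obtain ⟨z₀, hz₀⟩ := eventually_atTop.1 (isBigOWith_iff.1 hKO)
  refine ⟨K, hK, z₀, fun z hz => ?_⟩
  simpa only [Real.norm_of_nonneg (mTail_nonneg _ _)] using hz₀ z hz

section Subexponential

variable {τ : Measure ℝ} [IsProbabilityMeasure τ]

lemma MemS.exists_crossSet_le (hS : MemS τ) (hτ : τ (Iio 0) = 0) {δ : ℝ} (hδ : 0 < δ)
    (h₀ : ℝ) : ∃ h ≥ h₀, ∀ᶠ x in atTop, (τ.prod τ).real (crossSet h x) ≤ δ * mTail τ x := by
  obtain ⟨h, hτh, hh⟩ := ((tendsto_mTail_atTop τ |>.eventually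
    (eventually_le_nhds (by positivity : (0 : ℝ) < δ / 4))).and
      (eventually_ge_atTop (max h₀ 0))).exists
  refine ⟨h, le_of_max_le_left hh, ?_⟩
  filter_upwards [hS.eventually (eventually_le_nhds (by linarith : (2 : ℝ) < 2 + δ / 2)),
    eventually_ge_atTop h] with x hx hhx
  have hJ := measureReal_crossSet_add_le hτ hτ (le_of_max_le_right hh) hhx
  rw [div_le_iff₀ (hS.mTail_pos x)] at hx
  nlinarith [mTail_nonneg τ x, mul_le_mul_of_nonneg_right hτh (mTail_nonneg τ x)]

theorem MemS.memL (hS : MemS τ) (hτ : τ (Iio 0) = 0) : MemL τ := by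
  intro a ha
  have hpos := hS.mTail_pos
  -- the decomposition `le_mTail_mConv` squeezes the ratio between `1` and this bound
  have hbound : Tendsto (fun x => (mTail (mConv τ τ) x / mTail τ x - 2 + mTail τ a) /
      (mTail τ a - mTail τ x)) atTop (𝓝 1) := by
    have := ((hS.sub_const 2).add_const (mTail τ a)).div
      (tendsto_const_nhds.sub (tendsto_mTail_atTop τ)) (by simpa using (hpos a).ne')
    rwa [sub_self, zero_add, sub_zero, div_self (hpos a).ne'] at this
  refine tendsto_of_tendsto_of_tendsto_of_le_of_le' tendsto_const_nhds hbound ?_ ?_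
  · exact Eventually.of_forall fun x =>
      (one_le_div (hpos x)).2 (mTail_antitone (by linarith))
  · filter_upwards [(tendsto_mTail_atTop τ).eventually (gt_mem_nhds (hpos a)),
      eventually_ge_atTop a] with x hxa hx
    have hL := le_mTail_mConv hτ hτ ha.le hx
    rw [le_div_iff₀ (sub_pos.2 hxa)]
    have e1 : mTail τ (x - a) / mTail τ x * (mTail τ a - mTail τ x) =
        (mTail τ a - mTail τ x) * mTail τ (x - a) / mTail τ x := by ring
    have e2 : mTail (mConv τ τ) x / mTail τ x - 2 + mTail τ a =
        (mTail (mConv τ τ) x - (2 - mTail τ a) * mTail τ x) / mTail τ x := by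
      field_simp [(hpos x).ne']
      ring
    rw [e1, e2]
    exact div_le_div_of_nonneg_right (by linarith) (hpos x).le

end Subexponential

lemma mul_div_add_one_le {K δ : ℝ} (hK : 0 ≤ K) (hδ : 0 ≤ δ) : K * (δ / (K + 1)) ≤ δ := by
  rw [mul_div_left_comm]
  exact mul_le_of_le_one_right hδ ((div_le_one (by positivity)).2 (by linarith))

lemma MemS.exists_crossSet_le_of_isBigO {μ₁ μ₂ τ : Measure ℝ} [IsProbabilityMeasure μ₁]
    [IsProbabilityMeasure μ₂] [IsProbabilityMeasure τ] (hS : MemS τ) (hτ : τ (Iio 0) = 0)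
    (hO₁ : mTail μ₁ =O[atTop] mTail τ) (hO₂ : mTail μ₂ =O[atTop] mTail τ) {δ : ℝ} (hδ : 0 < δ) :
    ∃ h, ∀ᶠ x in atTop, (μ₁.prod μ₂).real (crossSet h x) ≤ δ * mTail τ x := by
  obtain ⟨K₁, hK₁, z₁, hz₁⟩ := exists_forall_ge_mTail_le_mul hO₁
  obtain ⟨K₂, hK₂, z₂, hz₂⟩ := exists_forall_ge_mTail_le_mul hO₂
  obtain ⟨h, hh, hcross⟩ := hS.exists_crossSet_le hτ
    (by positivity : 0 < δ / (K₂ * K₁ + 1)) (max z₁ z₂)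
  refine ⟨h, hcross.mono fun x hx => ?_⟩
  calc (μ₁.prod μ₂).real (crossSet h x) ≤ K₂ * (μ₁.prod τ).real (crossSet h x) :=
        measureReal_crossSet_le_mul τ hK₂ (fun z hz => hz₂ z ((le_max_right _ _).trans
          (hh.trans hz))) x
    _ = K₂ * (τ.prod μ₁).real (crossSet h x) := by rw [measureReal_crossSet_comm]
    _ ≤ K₂ * (K₁ * (τ.prod τ).real (crossSet h x)) := by
        gcongr
        exact measureReal_crossSet_le_mul τ hK₁ (fun z hz => hz₁ z ((le_max_left _ _).trans
          (hh.trans hz))) x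
    _ ≤ K₂ * (K₁ * (δ / (K₂ * K₁ + 1) * mTail τ x)) := by gcongr
    _ = K₂ * K₁ * (δ / (K₂ * K₁ + 1)) * mTail τ x := by ring
    _ ≤ δ * mTail τ x :=
        mul_le_mul_of_nonneg_right (mul_div_add_one_le (by positivity) hδ.le) (mTail_nonneg τ x)

theorem isEquivalent_mTail_mConv {μ₁ μ₂ τ : Measure ℝ} [IsProbabilityMeasure μ₁]
    [IsProbabilityMeasure μ₂] [IsProbabilityMeasure τ]
    (h₁ : μ₁ (Iio 0) = 0) (h₂ : μ₂ (Iio 0) = 0) (hτ : τ (Iio 0) = 0)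
    (hL₁ : MemL μ₁) (hL₂ : MemL μ₂) (hS : MemS τ)
    (hO₁ : mTail μ₁ =O[atTop] mTail τ) (hO₂ : mTail μ₂ =O[atTop] mTail τ)
    (hOτ : mTail τ =O[atTop] mTail (mConv μ₁ μ₂)) :
    mTail (mConv μ₁ μ₂) ~[atTop] fun x => mTail μ₁ x + mTail μ₂ x := by
  rw [isEquivalent_iff_eventually (mTail_nonneg _)
    (fun x => add_nonneg (mTail_nonneg _ x) (mTail_nonneg _ x))]
  intro ε hε
  obtain ⟨δ, hδ, rfl⟩ : ∃ δ, 0 < δ ∧ ε = 2 * δ := ⟨ε / 2, by positivity, by ring⟩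
  obtain ⟨C, hC, hCO⟩ := hOτ.exists_nonneg
  obtain ⟨h, hcross⟩ := hS.exists_crossSet_le_of_isBigO hτ hO₁ hO₂
    (by positivity : 0 < δ / (C + 1))
  have hshift := fun (μ : Measure ℝ) [IsProbabilityMeasure μ] (hL : MemL μ) =>
    (isEquivalent_iff_eventually (fun x => mTail_nonneg μ (x - h)) (mTail_nonneg μ)).1
      (hL.isEquivalent_sub h) δ hδ
  filter_upwards [hshift μ₁ hL₁, hshift μ₂ hL₂, hcross, isBigOWith_iff.1 hCO,
    (tendsto_mTail_atTop μ₂).eventually (eventually_le_nhds hδ)] with x hx₁ hx₂ hxc hxC hx₂δ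
  rw [Real.norm_of_nonneg (mTail_nonneg _ _), Real.norm_of_nonneg (mTail_nonneg _ _)] at hxC
  constructor
  · have hc : (μ₁.prod μ₂).real (crossSet h x) ≤ δ * mTail (mConv μ₁ μ₂) x :=
      calc _ ≤ δ / (C + 1) * (C * mTail (mConv μ₁ μ₂) x) := hxc.trans (by gcongr)
        _ = C * (δ / (C + 1)) * mTail (mConv μ₁ μ₂) x := by ring
        _ ≤ δ * mTail (mConv μ₁ μ₂) x :=
            mul_le_mul_of_nonneg_right (mul_div_add_one_le hC hδ.le) (mTail_nonneg _ x)
    have hsplit := mTail_mConv_le_add_crossSet (ρ := μ₁) (σ := μ₂) h x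
    have hc₀ : 0 ≤ (μ₁.prod μ₂).real (crossSet h x) := measureReal_nonneg
    rcases le_total δ 1 with hδ1 | hδ1
    · nlinarith [hx₁.1, hx₂.1, mul_le_mul_of_nonneg_left hsplit (by linarith : 0 ≤ 1 - δ)]
    · nlinarith [mTail_nonneg (mConv μ₁ μ₂) x, mTail_nonneg μ₁ x, mTail_nonneg μ₂ x]
  · nlinarith [mTail_add_mTail_le h₁ h₂ x, mul_nonneg hδ.le (mTail_nonneg μ₁ x),
      mul_nonneg hδ.le (mTail_nonneg μ₂ x),
      mul_le_mul_of_nonneg_left hx₂δ (mTail_nonneg μ₁ x)]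

section TailEquivalence

variable {σ τ : Measure ℝ}

lemma MemL.of_isEquivalent (h : mTail σ ~[atTop] mTail τ) (hτ : MemL τ) : MemL σ := fun a ha =>
  ((h.comp_tendsto (tendsto_atTop_add_const_right atTop (-a) tendsto_id)).div h).symm.tendsto_nhds
    (hτ a ha)

lemma MemPD.of_isEquivalent (h : mTail σ ~[atTop] mTail τ) (hτ : MemPD τ) : MemPD σ := by
  intro b hb
  obtain ⟨c, hc, hev⟩ := hτ b hb
  set c' := max c (1 / 2)
  have hc' : c' < 1 := max_lt hc (by norm_num)
  have hc'0 : 0 < c' := lt_max_of_lt_right (by norm_num)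
  have hratio : (fun x => mTail σ (b * x) / mTail σ x) ~[atTop]
      fun x => mTail τ (b * x) / mTail τ x :=
    (h.comp_tendsto (tendsto_id.const_mul_atTop (by linarith))).div h
  have hnonneg : ∀ (ν : Measure ℝ) x, 0 ≤ mTail ν (b * x) / mTail ν x := fun ν x =>
    div_nonneg (mTail_nonneg ν _) (mTail_nonneg ν x)
  -- with `1 - ε = 2c' / (1 + c')`, the ratio for `σ` is eventually at most `(1 + c') / 2 < 1`
  refine ⟨(1 + c') / 2, by linarith, ?_⟩
  filter_upwards [((isEquivalent_iff_eventually (hnonneg σ) (hnonneg τ)).1 hratio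
    ((1 - c') / (1 + c')) (div_pos (by linarith) (by linarith))), hev] with x hx hxc
  have e : 1 - (1 - c') / (1 + c') = 2 * c' / (1 + c') := by field_simp; ring
  rw [e, div_mul_eq_mul_div, div_le_iff₀ (by linarith)] at hx
  nlinarith [hx.1, le_max_left c (1 / 2), hnonneg σ x]

variable [IsProbabilityMeasure σ] [IsProbabilityMeasure τ]

lemma MemS.of_isEquivalent (hσ : σ (Iio 0) = 0) (hτ : τ (Iio 0) = 0)
    (h : mTail σ ~[atTop] mTail τ) (hS : MemS τ) : MemS σ := by
  have hL : MemL σ := (hS.memL hτ).of_isEquivalent h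
  have hconv := isEquivalent_mTail_mConv hσ hσ hτ hL hL hS h.isBigO h.isBigO
    (h.symm.isBigO.trans (isBigO_of_le_of_nonneg (mTail_nonneg σ) (mTail_le_mTail_mConv_left hσ)))
  refine (hconv.div (IsEquivalent.refl (u := mTail σ))).symm.tendsto_nhds
    (tendsto_const_nhds.congr fun x => ?_)
  rw [Pi.div_apply, ← two_mul, mul_div_cancel_right₀ _ (hL.mTail_pos x).ne']

lemma memA_iff_of_isEquivalent (hσ : σ (Iio 0) = 0) (hτ : τ (Iio 0) = 0)
    (h : mTail σ ~[atTop] mTail τ) : MemA σ ↔ MemA τ :=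
  ⟨fun hA => ⟨hA.1.of_isEquivalent hτ hσ h.symm, hA.2.of_isEquivalent h.symm⟩,
    fun hA => ⟨hA.1.of_isEquivalent hσ hτ h, hA.2.of_isEquivalent h⟩⟩

end TailEquivalence

section Comparison

variable {μ₁ μ₂ ν : Measure ℝ} [IsProbabilityMeasure μ₁] [IsProbabilityMeasure μ₂]

lemma isEquivalent_mTail_of_le (hL₁ : MemL μ₁) (hL₂ : MemL μ₂)
    (hp : mTail (mConv μ₁ μ₂) ~[atTop] fun x => mTail μ₁ x + mTail μ₂ x)
    (hle : ∀ x, mTail ν x ≤ mTail (mConv μ₁ μ₂) x)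
    (hlow : ∀ ε > 0, ∃ a, ∀ᶠ x in atTop, (1 - ε) * (mTail μ₁ x + mTail μ₂ x) ≤ mTail ν (x - a)) :
    mTail ν ~[atTop] mTail (mConv μ₁ μ₂) := by
  have hm : ∀ x, 0 ≤ mTail μ₁ x + mTail μ₂ x := fun x =>
    add_nonneg (mTail_nonneg μ₁ x) (mTail_nonneg μ₂ x)
  rw [isEquivalent_iff_eventually (mTail_nonneg ν) (mTail_nonneg _)]
  intro ε hε
  obtain ⟨δ, hδ, hδ1, hδε⟩ : ∃ δ, 0 < δ ∧ δ ≤ 1 / 2 ∧ δ ≤ ε / 3 :=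
    ⟨min (1 / 2) (ε / 3), by positivity, min_le_left _ _, min_le_right _ _⟩
  obtain ⟨a, ha⟩ := hlow δ hδ
  have hshift := fun (μ : Measure ℝ) [IsProbabilityMeasure μ] (hL : MemL μ) =>
    ((isEquivalent_iff_eventually (fun x => mTail_nonneg μ (x - -a)) (mTail_nonneg μ)).1
      (hL.isEquivalent_sub (-a)) δ hδ)
  filter_upwards [(isEquivalent_iff_eventually (mTail_nonneg _) hm).1 hp δ hδ,
    (tendsto_atTop_add_const_right atTop a tendsto_id).eventually ha, hshift μ₁ hL₁,
    hshift μ₂ hL₂] with x hpx hax hx₁ hx₂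
  simp only [id, add_sub_cancel_right, sub_neg_eq_add] at hax hx₁ hx₂
  have hν := mTail_nonneg ν x
  refine ⟨by nlinarith [hle x], ?_⟩
  have h1 : (1 - δ) * ((1 - δ) * (mTail μ₁ x + mTail μ₂ x)) ≤ mTail ν x :=
    le_trans (mul_le_mul_of_nonneg_left (by linarith [hx₁.2, hx₂.2]) (by linarith)) hax
  have h2 : (1 - δ) * ((1 - δ) * ((1 - δ) * mTail (mConv μ₁ μ₂) x)) ≤ mTail ν x :=
    le_trans (mul_le_mul_of_nonneg_left (mul_le_mul_of_nonneg_left hpx.1 (by linarith))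
      (by linarith)) h1
  nlinarith [mTail_nonneg (mConv μ₁ μ₂) x, mul_nonneg hδ.le hδ.le]

theorem memA_mConv_iff [IsProbabilityMeasure ν] (h₁ : μ₁ (Iio 0) = 0) (h₂ : μ₂ (Iio 0) = 0)
    (hν : ν (Iio 0) = 0) (hL₁ : MemL μ₁) (hL₂ : MemL μ₂)
    (hle : ∀ x, mTail ν x ≤ mTail (mConv μ₁ μ₂) x)
    (hlow : ∀ ε > 0, ∃ a, ∀ᶠ x in atTop, (1 - ε) * (mTail μ₁ x + mTail μ₂ x) ≤ mTail ν (x - a)) :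
    MemA (mConv μ₁ μ₂) ↔ MemA ν := by
  have h₁₂ := mConv_Iio_zero h₁ h₂
  have hequiv : ∀ (τ : Measure ℝ) [IsProbabilityMeasure τ], τ (Iio 0) = 0 → MemS τ →
      mTail μ₁ =O[atTop] mTail τ → mTail μ₂ =O[atTop] mTail τ →
      mTail τ =O[atTop] mTail (mConv μ₁ μ₂) → mTail ν ~[atTop] mTail (mConv μ₁ μ₂) :=
    fun τ _ hτ hS hO₁ hO₂ hOτ => isEquivalent_mTail_of_le hL₁ hL₂
      (isEquivalent_mTail_mConv h₁ h₂ hτ hL₁ hL₂ hS hO₁ hO₂ hOτ) hle hlow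
  refine ⟨fun hA => ?_, fun hA => ?_⟩
  · refine (memA_iff_of_isEquivalent hν h₁₂ (hequiv _ h₁₂ hA.1 ?_ ?_ (isBigO_refl _ _))).2 hA
    exacts [isBigO_of_le_of_nonneg (mTail_nonneg μ₁) (mTail_le_mTail_mConv_left h₂),
      isBigO_of_le_of_nonneg (mTail_nonneg μ₂) (mTail_le_mTail_mConv_right h₁)]
  · -- `hlow` dominates `mTail μ₁ + mTail μ₂` by a shift of `mTail ν`, which is long-tailed
    obtain ⟨a, ha⟩ := hlow (1 / 2) (by norm_num)
    have hm : (fun x => mTail μ₁ x + mTail μ₂ x) =O[atTop] mTail ν :=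
      (IsBigO.of_bound 2 (ha.mono fun x hx => by
        simp only [Real.norm_of_nonneg (add_nonneg (mTail_nonneg μ₁ x) (mTail_nonneg μ₂ x)),
          Real.norm_of_nonneg (mTail_nonneg ν _)]
        linarith)).trans ((hA.1.memL hν).isEquivalent_sub a).isBigO
    have hO := fun (μ : Measure ℝ) (hμ : ∀ x, mTail μ x ≤ mTail μ₁ x + mTail μ₂ x) =>
      (isBigO_of_le_of_nonneg (mTail_nonneg μ) hμ).trans hm
    refine (memA_iff_of_isEquivalent hν h₁₂ (hequiv ν hν hA.1 ?_ ?_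
      (isBigO_of_le_of_nonneg (mTail_nonneg ν) hle))).1 hA
    exacts [hO μ₁ fun x => le_add_of_nonneg_right (mTail_nonneg μ₂ x),
      hO μ₂ fun x => le_add_of_nonneg_left (mTail_nonneg μ₁ x)]

end Comparison

section Gauge

variable {A : Set (Fin d → ℝ)}

lemma IsRSet.compl_mem_nhds_zero (hA : IsRSet d A) : Aᶜ ∈ 𝓝 (0 : Fin d → ℝ) :=
  mem_interior_iff_mem_nhds.1 (by rw [interior_compl]; exact hA.zero_notMem_closure)

lemma suprA_eq_gauge (hA : IsRSet d A) : suprA A = gauge Aᶜ := by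
  funext z
  have habs : Absorbent ℝ Aᶜ := absorbent_nhds_zero hA.compl_mem_nhds_zero
  have hstar : StarConvex ℝ 0 Aᶜ :=
    hA.convex_compl.starConvex (mem_of_mem_nhds hA.compl_mem_nhds_zero)
  have hmem : ∀ u : ℝ, 0 < u → (z ∈ u • A ↔ z ∉ u • Aᶜ) := fun u hu => by
    rw [mem_smul_set_iff_inv_smul_mem₀ hu.ne', mem_smul_set_iff_inv_smul_mem₀ hu.ne',
      mem_compl_iff, not_not]
  have hle : ∀ u ∈ {u : ℝ | 0 < u ∧ z ∈ u • A}, u ≤ gauge Aᶜ z := fun u ⟨hu, hz⟩ =>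
    le_gauge_of_notMem hstar (habs z) ((hmem u hu).1 hz)
  have hlt : ∀ u, 0 < u → u < gauge Aᶜ z → z ∈ u • A := fun u hu hug =>
    (hmem u hu).2 fun hz => (gauge_le_of_mem hu.le hz).not_gt hug
  rcases (gauge_nonneg z).eq_or_lt with h0 | hpos
  · have hempty : {u : ℝ | 0 < u ∧ z ∈ u • A} = ∅ :=
      eq_empty_of_forall_notMem fun u hu => (hle u hu).not_gt (h0 ▸ hu.1)
    rw [suprA, hempty, Real.sSup_empty, h0]
  · refine csSup_eq_of_forall_le_of_forall_lt_exists_gt ⟨gauge Aᶜ z / 2, by positivity,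
      hlt _ (by positivity) (by linarith)⟩ hle fun w hw => ?_
    refine ⟨(max w 0 + gauge Aᶜ z) / 2, ⟨by positivity, hlt _ (by positivity) ?_⟩, ?_⟩
    · linarith [max_lt hw hpos]
    · linarith [le_max_left w 0, max_lt hw hpos]

end Gauge

section RandomVariables

variable {P : Measure Ω}

lemma mTail_map {Y : Ω → ℝ} (hY : Measurable Y) (x : ℝ) :
    mTail (P.map Y) x = P.real (Y ⁻¹' Ioi x) :=
  map_measureReal_apply hY measurableSet_Ioi

lemma map_Iio_zero {Y : Ω → ℝ} (hY : Measurable Y) (h0 : ∀ ω, 0 ≤ Y ω) : P.map Y (Iio 0) = 0 := by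
  rw [Measure.map_apply hY measurableSet_Iio]
  exact measure_mono_null (fun ω (hω : Y ω < 0) => (h0 ω).not_gt hω) measure_empty

variable [IsProbabilityMeasure P]

lemma mTail_map_mono {T S : Ω → ℝ} (hT : Measurable T) (hS : Measurable S)
    (hle : ∀ ω, T ω ≤ S ω) (x : ℝ) : mTail (P.map T) x ≤ mTail (P.map S) x := by
  rw [mTail_map hT, mTail_map hS]
  exact measureReal_mono fun ω (h : x < T ω) => show x < S ω from h.trans_le (hle ω)

/-- The event `{T > x - a}` contains `{Y₁ > x, R₂ ≤ a} ∪ {Y₂ > x, R₁ ≤ a}`; apply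
inclusion–exclusion and independence. -/
lemma mTail_mul_add_mTail_mul_le {Y₁ Y₂ T R₁ R₂ : Ω → ℝ} (hY₁ : Measurable Y₁)
    (hY₂ : Measurable Y₂) (hT : Measurable T) (hR₁ : Measurable R₁) (hR₂ : Measurable R₂)
    (hY₁₂ : IndepFun Y₁ Y₂ P) (hY₁R₂ : IndepFun Y₁ R₂ P) (hY₂R₁ : IndepFun Y₂ R₁ P)
    (hle₁ : ∀ ω, Y₁ ω ≤ T ω + R₂ ω) (hle₂ : ∀ ω, Y₂ ω ≤ T ω + R₁ ω) (x a : ℝ) :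
    mTail (P.map Y₁) x * (1 - mTail (P.map R₂) a) + mTail (P.map Y₂) x * (1 - mTail (P.map R₁) a)
      ≤ mTail (P.map T) (x - a) + mTail (P.map Y₁) x * mTail (P.map Y₂) x := by
  have hIic : ∀ {R : Ω → ℝ}, Measurable R → P.real (R ⁻¹' Iic a) = 1 - mTail (P.map R) a :=
    fun hR => by
      rw [mTail_map hR, ← compl_Ioi, preimage_compl, measureReal_compl (hR measurableSet_Ioi),
        probReal_univ]
  have hindep : ∀ {Y R : Ω → ℝ} {s t : Set ℝ}, IndepFun Y R P → MeasurableSet s →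
      MeasurableSet t → P.real (Y ⁻¹' s ∩ R ⁻¹' t) = P.real (Y ⁻¹' s) * P.real (R ⁻¹' t) :=
    fun hYR hs ht => by
      rw [measureReal_def, hYR.measure_inter_preimage_eq_mul _ _ hs ht, ENNReal.toReal_mul]; rfl
  have hIE := measureReal_union_add_inter (μ := P) (s := Y₁ ⁻¹' Ioi x ∩ R₂ ⁻¹' Iic a)
    (t := Y₂ ⁻¹' Ioi x ∩ R₁ ⁻¹' Iic a) ((hY₂ measurableSet_Ioi).inter (hR₁ measurableSet_Iic))
  rw [hindep hY₁R₂ measurableSet_Ioi measurableSet_Iic,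
    hindep hY₂R₁ measurableSet_Ioi measurableSet_Iic, hIic hR₁, hIic hR₂] at hIE
  rw [mTail_map hY₁, mTail_map hY₂, mTail_map hT, ← hindep hY₁₂ measurableSet_Ioi measurableSet_Ioi,
    ← hIE]
  refine add_le_add (measureReal_mono ?_) (measureReal_mono fun ω hω => ⟨hω.1.1, hω.2.1⟩)
  rintro ω (⟨h1, h2⟩ | ⟨h1, h2⟩)
  · exact show x - a < T ω by linarith [hle₁ ω, show x < Y₁ ω from h1, show R₂ ω ≤ a from h2]
  · exact show x - a < T ω by linarith [hle₂ ω, show x < Y₂ ω from h1, show R₁ ω ≤ a from h2]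

lemma exists_eventually_mTail_add_le {Y₁ Y₂ T R₁ R₂ : Ω → ℝ} (hY₁ : Measurable Y₁)
    (hY₂ : Measurable Y₂) (hT : Measurable T) (hR₁ : Measurable R₁) (hR₂ : Measurable R₂)
    (hY₁₂ : IndepFun Y₁ Y₂ P) (hY₁R₂ : IndepFun Y₁ R₂ P) (hY₂R₁ : IndepFun Y₂ R₁ P)
    (hle₁ : ∀ ω, Y₁ ω ≤ T ω + R₂ ω) (hle₂ : ∀ ω, Y₂ ω ≤ T ω + R₁ ω) :
    ∀ ε > 0, ∃ a, ∀ᶠ x in atTop,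
      (1 - ε) * (mTail (P.map Y₁) x + mTail (P.map Y₂) x) ≤ mTail (P.map T) (x - a) := by
  intro ε hε
  have hsmall := fun (ν : Measure ℝ) [IsFiniteMeasure ν] =>
    (tendsto_mTail_atTop ν).eventually (eventually_le_nhds (by positivity : 0 < ε / 2))
  obtain ⟨a, ha₁, ha₂⟩ := ((hsmall (P.map R₁)).and (hsmall (P.map R₂))).exists
  refine ⟨a, ?_⟩
  filter_upwards [hsmall (P.map Y₂)] with x hx
  have := mTail_mul_add_mTail_mul_le hY₁ hY₂ hT hR₁ hR₂ hY₁₂ hY₁R₂ hY₂R₁ hle₁ hle₂ x a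
  nlinarith [mTail_nonneg (P.map Y₁) x, mTail_nonneg (P.map Y₂) x,
    mul_le_mul_of_nonneg_left hx (mTail_nonneg (P.map Y₁) x),
    mul_le_mul_of_nonneg_left ha₁ (mTail_nonneg (P.map Y₂) x),
    mul_le_mul_of_nonneg_left ha₂ (mTail_nonneg (P.map Y₁) x)]

theorem memA_mConv_map_iff {E : Type*} [AddCommGroup E] [MeasurableSpace E] [MeasurableAdd₂ E]
    [MeasurableNeg E] {g : E → ℝ} (hg : Measurable g) (hg₀ : ∀ z, 0 ≤ g z)
    (hg_add : ∀ z w, g (z + w) ≤ g z + g w) {X₁ X₂ : Ω → E} (hX₁ : Measurable X₁)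
    (hX₂ : Measurable X₂) (hind : IndepFun X₁ X₂ P)
    (hL₁ : MemL (P.map fun ω => g (X₁ ω))) (hL₂ : MemL (P.map fun ω => g (X₂ ω))) :
    MemA (mConv (P.map fun ω => g (X₁ ω)) (P.map fun ω => g (X₂ ω))) ↔
      MemA (P.map fun ω => g (X₁ ω + X₂ ω)) := by
  have hY₁ : Measurable fun ω => g (X₁ ω) := hg.comp hX₁
  have hY₂ : Measurable fun ω => g (X₂ ω) := hg.comp hX₂
  have hT : Measurable fun ω => g (X₁ ω + X₂ ω) := hg.comp (hX₁.add hX₂)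
  have hY₁₂ : IndepFun (fun ω => g (X₁ ω)) (fun ω => g (X₂ ω)) P := hind.comp hg hg
  have hle : ∀ z w, g z ≤ g (z + w) + g (-w) := fun z w => by
    simpa using hg_add (z + w) (-w)
  have := Measure.isProbabilityMeasure_map (μ := P) hY₁.aemeasurable
  have := Measure.isProbabilityMeasure_map (μ := P) hY₂.aemeasurable
  have := Measure.isProbabilityMeasure_map (μ := P) hT.aemeasurable
  refine memA_mConv_iff (map_Iio_zero hY₁ fun _ => hg₀ _) (map_Iio_zero hY₂ fun _ => hg₀ _)
    (map_Iio_zero hT fun _ => hg₀ _) hL₁ hL₂ (fun x => ?_)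
    (exists_eventually_mTail_add_le hY₁ hY₂ hT (hg.comp (hX₁.neg)) (hg.comp (hX₂.neg)) hY₁₂
      (hind.comp hg (hg.comp measurable_neg)) (hind.symm.comp hg (hg.comp measurable_neg))
      (fun ω => hle (X₁ ω) (X₂ ω)) (fun ω => add_comm (X₁ ω) (X₂ ω) ▸ hle (X₂ ω) (X₁ ω)))
  rw [mConv_eq_conv, ← hY₁₂.map_add_eq_map_conv_map hY₁ hY₂]
  exact mTail_map_mono hT (hY₁.add hY₂) (fun ω => hg_add _ _) x

end RandomVariables

/-- For independent `X⁽¹⁾, X⁽²⁾` with distributions in `𝓣_A`: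
`F_A⁽¹⁾ * F_A⁽²⁾ ∈ 𝓐` if and only if `F₁ * F₂ ∈ 𝓐_A`. -/
theorem statement5 (P : Measure Ω) [IsProbabilityMeasure P]
    (A : Set (Fin d → ℝ)) (hA : IsRSet d A)
    (X₁ X₂ : Ω → Fin d → ℝ) (hX₁ : Measurable X₁) (hX₂ : Measurable X₂)
    (hind : IndepFun X₁ X₂ P)
    (h₁ : MemT (FA P A X₁)) (h₂ : MemT (FA P A X₂)) :
    MemA (mConv (FA P A X₁) (FA P A X₂)) ↔ MemA (FA P A fun ω => X₁ ω + X₂ ω) := by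
  have hC := hA.compl_mem_nhds_zero
  simp only [FA, suprA_eq_gauge hA] at h₁ h₂ ⊢
  exact memA_mConv_map_iff (continuous_gauge hA.convex_compl hC).measurable gauge_nonneg
    (gauge_add_le hA.convex_compl (absorbent_nhds_zero hC)) hX₁ hX₂ hind h₁.1 h₂.1

end Paper
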